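/- Let λ > 0, let X₁,…,X_m ∈ R^d be vectors in the unit ball, and let V := Σ_{s=1}^m X_s X_sᵀ. Then log(det(λI + V)/λ^d) ≤ d log(1 + m/(λd)). -/

import Mathlib

/-!
The eigenvalues of `λI + V` are positive, so AM-GM bounds their product, the determinant, by the
`d`-th power of their mean, `trace (λI + V) / d`. The trace is `λd + ∑ ‖X_s‖² ≤ λd + m`.
-/

open Matrix Real Finset

theorem Real.prod_le_sum_div_card_pow {ι : Type*} (s : Finset ι) {z : ι → ℝ}
    (hz : ∀ i ∈ s, 0 ≤ z i) : ∏ i ∈ s, z i ≤ ((∑ i ∈ s, z i) / #s) ^ #s := by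
  rcases s.eq_empty_or_nonempty with rfl | hs
  · simp
  have hcard : (0 : ℝ) < #s := by exact_mod_cast hs.card_pos
  have hprod : 0 ≤ ∏ i ∈ s, z i := prod_nonneg hz
  have amgm := geom_mean_le_arith_mean s (fun _ => 1) z (by simp) (by simpa using hcard) hz
  simp only [rpow_one, sum_const, nsmul_eq_mul, mul_one, one_mul] at amgm
  calc ∏ i ∈ s, z i = ((∏ i ∈ s, z i) ^ (#s : ℝ)⁻¹) ^ #s := by
        rw [← rpow_natCast, ← rpow_mul hprod, inv_mul_cancel₀ hcard.ne', rpow_one]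
    _ ≤ ((∑ i ∈ s, z i) / #s) ^ #s := pow_le_pow_left₀ (by positivity) amgm _

theorem Matrix.PosSemidef.det_le_trace_div_card_pow {n : Type*} [Fintype n] [DecidableEq n]
    {A : Matrix n n ℝ} (hA : A.PosSemidef) :
    A.det ≤ (A.trace / Fintype.card n) ^ Fintype.card n := by
  rw [hA.isHermitian.det_eq_prod_eigenvalues, hA.isHermitian.trace_eq_sum_eigenvalues]
  simpa using Real.prod_le_sum_div_card_pow univ fun i _ => hA.eigenvalues_nonneg i

/-- Determinant–trace inequality: if `X₁,…,X_m` lie in the unit ball and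
`V = ∑ s, X_s X_sᵀ`, then `log(det(λI + V)/λ^d) ≤ d log(1 + m/(λd))`. -/
theorem stmt10 {d m : ℕ} (lam : ℝ) (hlam : 0 < lam)
    (X : Fin m → Fin d → ℝ) (hX : ∀ s, ∑ i, X s i ^ 2 ≤ 1) :
    Real.log
        ((lam • (1 : Matrix (Fin d) (Fin d) ℝ) + ∑ s, vecMulVec (X s) (X s)).det / lam ^ d) ≤
      d * Real.log (1 + m / (lam * d)) := by
  set M := lam • (1 : Matrix (Fin d) (Fin d) ℝ) + ∑ s, vecMulVec (X s) (X s)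
  have hM : M.PosDef := (PosDef.one.smul hlam).add_posSemidef
    (posSemidef_sum _ fun s _ => by simpa using posSemidef_vecMulVec_self_star (X s))
  have htrace : M.trace ≤ lam * d + m := by
    simp only [M, trace_add, trace_smul, trace_one, trace_sum, trace_vecMulVec, Fintype.card_fin,
      smul_eq_mul, mul_comm lam]
    gcongr
    simpa [dotProduct, sq] using sum_le_card_nsmul univ _ 1 fun s _ => hX s
  have hdet : M.det / lam ^ d ≤ (1 + m / (lam * d)) ^ d := by
    rw [div_le_iff₀ (by positivity), ← mul_pow]
    calc M.det ≤ (M.trace / d) ^ d := by simpa using hM.posSemidef.det_le_trace_div_card_pow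
      _ ≤ ((lam * d + m) / d) ^ d := by
          have := hM.posSemidef.trace_nonneg
          gcongr
      _ = ((1 + m / (lam * d)) * lam) ^ d := by
          rcases d.eq_zero_or_pos with rfl | hd
          · simp
          · congr 1; field_simp
  calc Real.log (M.det / lam ^ d) ≤ Real.log ((1 + m / (lam * d)) ^ d) :=
        log_le_log (by have := hM.det_pos; positivity) hdet
    _ = d * Real.log (1 + m / (lam * d)) := log_pow _ _
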